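/- Chebyshev-type maximal inequality for SL-martingales: if (X_j, F_j)_{j=1}^n is an SL-martingale with E(X_j²) < ∞ for all 1 ≤ j ≤ n, then for every λ > 0, V(max_{1≤j≤n}|X_j| ≥ λ) ≤ E(X_n²)/λ². -/

import Mathlib

/-!
Jensen's inequality for the sublinear conditional expectation turns `X_j = E_j(X_n)` into
`X_j² ≤ E_j(X_n²)`, so Doob's argument applies to `Z_j = X_j²` at level `c = λ²`. Split the
event `{max_j Z_j ≥ c}` according to the first crossing time `τ`. Backward induction on `j`,
using subadditivity, the tower property and locality, gives
`E_j(c · 1{j ≤ τ ≤ n}) ≤ E_j(1{τ ≥ j} · Z_n)`, which at `j = 1` reads `c · V(max Z ≥ c) ≤ E(Z_n)`.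
-/

open MeasureTheory Filter Set

/-- An `F_t`-consistent sublinear expectation (`SL`-expectation) in discrete time:
a filtration `F t` of sub-σ-algebras, a space `H` of measurable real functions closed
under constants, `|·|`, addition, scalar multiplication and multiplication by indicators,
and conditional expectations `Et t : H → H ∩ mF_t` satisfying monotonicity, the tower
property, locality, projection, sub-additivity, positive homogeneity and the monotone
continuity (Fatou) property.  `E := Et 0` is identified with a real-valued functional. -/
structure CondSLExp (Ω : Type*) [m : MeasurableSpace Ω] where
  F : ℕ → MeasurableSpace Ω
  F_le : ∀ t, F t ≤ m
  F_mono : Monotone F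
  H : Set (Ω → ℝ)
  H_meas : ∀ X ∈ H, Measurable X
  const_mem : ∀ c : ℝ, (fun _ => c) ∈ H
  abs_mem : ∀ X ∈ H, (fun ω => |X ω|) ∈ H
  add_mem : ∀ X ∈ H, ∀ Y ∈ H, X + Y ∈ H
  smul_mem : ∀ (c : ℝ), ∀ X ∈ H, c • X ∈ H
  indmul_mem : ∀ (A : Set Ω), MeasurableSet A → ∀ X ∈ H, A.indicator X ∈ H
  Et : ℕ → (Ω → ℝ) → (Ω → ℝ)
  E : (Ω → ℝ) → ℝ
  E0_eq : ∀ X ∈ H, ∀ ω, Et 0 X ω = E X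
  Et_mem : ∀ t, ∀ X ∈ H, Et t X ∈ H
  Et_meas : ∀ t, ∀ X ∈ H, Measurable[F t] (Et t X)
  mono : ∀ t, ∀ X ∈ H, ∀ Y ∈ H, (∀ ω, X ω ≤ Y ω) → ∀ ω, Et t X ω ≤ Et t Y ω
  tower : ∀ s t : ℕ, s ≤ t → ∀ Y ∈ H, Et s (Et t Y) = Et s Y
  locality : ∀ (t : ℕ) (A : Set Ω), MeasurableSet[F t] A → ∀ Y ∈ H,
      Et t (A.indicator Y) = A.indicator (Et t Y)
  proj : ∀ t, ∀ Y ∈ H, Measurable[F t] Y → Et t Y = Y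
  subadd : ∀ t, ∀ X ∈ H, ∀ Y ∈ H, ∀ ω, Et t (X + Y) ω ≤ Et t X ω + Et t Y ω
  poshom : ∀ (t : ℕ) (lam : Ω → ℝ), lam ∈ H → Measurable[F t] lam → ∀ Y ∈ H,
      (fun ω => lam ω * Y ω) ∈ H →
      ∀ ω, Et t (fun ω' => lam ω' * Y ω') ω
        = max (lam ω) 0 * Et t Y ω + max (-(lam ω)) 0 * Et t (fun ω' => -(Y ω')) ω
  fatou : ∀ X : ℕ → Ω → ℝ, (∀ i, X i ∈ H) → (∀ ω, Antitone fun i => X i ω) →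
      (∀ ω, Tendsto (fun i => X i ω) atTop (nhds 0)) →
      Tendsto (fun i => E (X i)) atTop (nhds 0)

variable {Ω : Type*} [MeasurableSpace Ω]

/-- The upper capacity `V(A) := E(I_A)`. -/
noncomputable def CondSLExp.V (S : CondSLExp Ω) (A : Set Ω) : ℝ :=
  S.E (A.indicator fun _ => (1 : ℝ))

/-- A property holds quasi-surely if it holds outside a set `N` with `E(I_N) = 0`. -/
def CondSLExp.QS (S : CondSLExp Ω) (P : Ω → Prop) : Prop :=
  ∃ N : Set Ω, S.V N = 0 ∧ ∀ ω ∉ N, P ω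

/-- `X` is independent of `F n`: `X` is independent of `I_A` under `E` for every
`A ∈ F n`, i.e. `E(φ(I_A, X)) = E(φ̄(I_A))` where `φ̄(x) := E(φ(x, X))`. -/
def CondSLExp.IndepOf (S : CondSLExp Ω) (X : Ω → ℝ) (n : ℕ) : Prop :=
  ∀ A : Set Ω, MeasurableSet[S.F n] A → ∀ φ : ℝ → ℝ → ℝ,
    (fun ω => φ (A.indicator (fun _ => (1 : ℝ)) ω) (X ω)) ∈ S.H →
    (∀ x : ℝ, (fun ω => φ x (X ω)) ∈ S.H) →
    (fun ω => S.E fun ω' => φ (A.indicator (fun _ => (1 : ℝ)) ω) (X ω')) ∈ S.H →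
    S.E (fun ω => φ (A.indicator (fun _ => (1 : ℝ)) ω) (X ω)) =
      S.E (fun ω => S.E fun ω' => φ (A.indicator (fun _ => (1 : ℝ)) ω) (X ω'))

/-- Membership in `L_b¹`, via the characterization
`L_b¹ = {X ∈ L¹ : lim_n E(|X| I_{|X|>n}) = 0}`. -/
def CondSLExp.InLb1 (S : CondSLExp Ω) (X : Ω → ℝ) : Prop :=
  Tendsto (fun n : ℕ => S.E fun ω => if (n : ℝ) < |X ω| then |X ω| else 0)
    atTop (nhds 0)

namespace CondSLExp

variable (S : CondSLExp Ω)

lemma Et_const (t : ℕ) (c : ℝ) : S.Et t (fun _ => c) = fun _ => c :=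
  S.proj t _ (S.const_mem c) measurable_const

lemma neg_mem {Z : Ω → ℝ} (hZ : Z ∈ S.H) : (fun ω => -Z ω) ∈ S.H := by
  convert S.smul_mem (-1) Z hZ using 1
  funext ω
  simp

lemma sum_mem {ι : Type*} (s : Finset ι) {f : ι → Ω → ℝ} (hf : ∀ i ∈ s, f i ∈ S.H) :
    ∑ i ∈ s, f i ∈ S.H := by
  classical
  induction s using Finset.induction_on with
  | empty => rw [Finset.sum_empty]; exact S.const_mem 0
  | insert i s hi ih =>
    rw [Finset.sum_insert hi]
    exact S.add_mem _ (hf i (s.mem_insert_self i)) _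
      (ih fun j hj => hf j (Finset.mem_insert_of_mem hj))

lemma Et_nonneg {t : ℕ} {Z : Ω → ℝ} (hZ : Z ∈ S.H) (hZ0 : ∀ ω, 0 ≤ Z ω) (ω : Ω) :
    0 ≤ S.Et t Z ω := by
  simpa [S.Et_const] using S.mono t _ (S.const_mem 0) Z hZ hZ0 ω

lemma neg_Et_le {t : ℕ} {Z : Ω → ℝ} (hZ : Z ∈ S.H) (ω : Ω) :
    -S.Et t Z ω ≤ S.Et t (fun ω' => -Z ω') ω := by
  have h := S.subadd t Z hZ _ (S.neg_mem hZ) ω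
  have hzero : Z + (fun ω' => -Z ω') = fun _ => 0 := by funext; simp
  rw [hzero, S.Et_const] at h
  linarith

lemma const_mul_Et_le {t : ℕ} {Z : Ω → ℝ} (hZ : Z ∈ S.H) (c : ℝ) (ω : Ω) :
    c * S.Et t Z ω ≤ S.Et t (fun ω' => c * Z ω') ω := by
  rw [S.poshom t (fun _ => c) (S.const_mem c) measurable_const Z hZ (S.smul_mem c Z hZ) ω]
  rcases le_or_gt 0 c with hc | hc
  · simp [max_eq_left hc, max_eq_right (neg_nonpos.mpr hc)]
  · rw [max_eq_right hc.le, max_eq_left (neg_nonneg.mpr hc.le)]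
    nlinarith [S.neg_Et_le (t := t) hZ ω]

lemma sq_Et_le_Et_sq {t : ℕ} {Z : Ω → ℝ} (hZ : Z ∈ S.H) (hZ2 : (fun ω => Z ω ^ 2) ∈ S.H)
    (ω : Ω) : S.Et t Z ω ^ 2 ≤ S.Et t (fun ω' => Z ω' ^ 2) ω := by
  set a := S.Et t Z ω
  -- tangent line at `a`: `2 a Z ≤ Z² + a²`
  have htangent : S.Et t (fun ω' => 2 * a * Z ω') ω ≤
      S.Et t ((fun ω' => Z ω' ^ 2) + fun _ => a ^ 2) ω :=
    S.mono t _ (S.smul_mem _ Z hZ) _ (S.add_mem _ hZ2 _ (S.const_mem _))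
      (fun ω' => by
        simp only [Pi.add_apply, Pi.smul_apply, smul_eq_mul]
        nlinarith [sq_nonneg (Z ω' - a)]) ω
  have hsub := S.subadd t _ hZ2 _ (S.const_mem (a ^ 2)) ω
  rw [S.Et_const] at hsub
  nlinarith [S.const_mul_Et_le (t := t) hZ (2 * a) ω]

lemma Et_le_Et_of_Et_le {s t : ℕ} (hst : s ≤ t) {f g : Ω → ℝ} (hf : f ∈ S.H) (hg : g ∈ S.H)
    (hfg : ∀ ω, S.Et t f ω ≤ S.Et t g ω) (ω : Ω) : S.Et s f ω ≤ S.Et s g ω := by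
  rw [← S.tower s t hst f hf, ← S.tower s t hst g hg]
  exact S.mono s _ (S.Et_mem t f hf) _ (S.Et_mem t g hg) hfg ω

-- On an empty `Ω` the axiom `E0_eq` is vacuous and only `fatou` pins `E` down.
lemma E_eq_zero_of_isEmpty [IsEmpty Ω] (f : Ω → ℝ) : S.E f = 0 := by
  rw [Subsingleton.elim f fun _ => 0]
  exact tendsto_const_nhds_iff.mp <| S.fatou (fun _ _ => 0) (fun _ => S.const_mem 0)
    isEmptyElim isEmptyElim

lemma E_le_of_Et_le {t : ℕ} {f g : Ω → ℝ} (hf : f ∈ S.H) (hg : g ∈ S.H)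
    (hfg : ∀ ω, S.Et t f ω ≤ S.Et t g ω) : S.E f ≤ S.E g := by
  rcases isEmpty_or_nonempty Ω with hΩ | hΩ
  · rw [Subsingleton.elim f g]
  · obtain ⟨ω⟩ := hΩ
    rw [← S.E0_eq f hf ω, ← S.E0_eq g hg ω]
    exact S.Et_le_Et_of_Et_le (Nat.zero_le t) hf hg hfg ω

lemma E_mono {f g : Ω → ℝ} (hf : f ∈ S.H) (hg : g ∈ S.H) (hfg : ∀ ω, f ω ≤ g ω) :
    S.E f ≤ S.E g :=
  S.E_le_of_Et_le (t := 0) hf hg (S.mono 0 f hf g hg hfg)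

lemma E_const_mul {c : ℝ} (hc : 0 ≤ c) {f : Ω → ℝ} (hf : f ∈ S.H) :
    S.E (fun ω => c * f ω) = c * S.E f := by
  rcases isEmpty_or_nonempty Ω with hΩ | hΩ
  · simp [S.E_eq_zero_of_isEmpty]
  · obtain ⟨ω⟩ := hΩ
    have hcf : (fun ω => c * f ω) ∈ S.H := S.smul_mem c f hf
    have h := S.poshom 0 (fun _ => c) (S.const_mem c) measurable_const f hf hcf ω
    rwa [max_eq_left hc, max_eq_right (neg_nonpos.mpr hc), zero_mul, add_zero,
      S.E0_eq _ hcf, S.E0_eq f hf] at h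

end CondSLExp

section Crossing

variable {α : Type*} (Z : ℕ → α → ℝ) (c : ℝ) (m n : ℕ)

def belowUntil (j : ℕ) : Set α := {ω | ∀ i, m ≤ i → i < j → Z i ω < c}

def firstCrossing (j : ℕ) : Set α := belowUntil Z c m j ∩ {ω | c ≤ Z j ω}

/-- `c` on the first crossing of level `c` at a time in `[j, n]`, and `0` elsewhere. -/
noncomputable def crossingSum (j : ℕ) : α → ℝ :=
  ∑ i ∈ Finset.Ico j (n + 1), (firstCrossing Z c m i).indicator fun _ => c

variable {Z c m n}

lemma belowUntil_self : belowUntil Z c m m = univ :=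
  eq_univ_of_forall fun _ _ hmi him => absurd hmi (not_le.mpr him)

lemma belowUntil_succ {j : ℕ} (hmj : m ≤ j) :
    belowUntil Z c m (j + 1) = belowUntil Z c m j \ firstCrossing Z c m j := by
  ext ω
  simp only [firstCrossing, sdiff_self_inter, Set.mem_sdiff, belowUntil, mem_ofPred_eq, not_le]
  constructor
  · intro h
    exact ⟨fun i hmi hij => h i hmi (by omega), h j hmj (by omega)⟩
  · rintro ⟨h, hj⟩ i hmi hij
    rcases Nat.lt_succ_iff_lt_or_eq.mp hij with hij | rfl
    exacts [h i hmi hij, hj]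

lemma indicator_belowUntil {j : ℕ} (hmj : m ≤ j) (g : α → ℝ) (ω : α) :
    (belowUntil Z c m j).indicator g ω =
      (firstCrossing Z c m j).indicator g ω + (belowUntil Z c m (j + 1)).indicator g ω := by
  rw [belowUntil_succ hmj, indicator_sdiff (s := firstCrossing Z c m j) inter_subset_left,
    Pi.sub_apply]
  ring

lemma measurableSet_belowUntil {F : ℕ → MeasurableSpace α} (hF : Monotone F)
    (hZ : ∀ i, Measurable[F i] (Z i)) {j t : ℕ} (hjt : j ≤ t + 1) :
    MeasurableSet[F t] (belowUntil Z c m j) := by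
  have hinter : belowUntil Z c m j = ⋂ i, ⋂ (_ : m ≤ i), ⋂ (_ : i < j), {ω | Z i ω < c} := by
    ext; simp [belowUntil]
  rw [hinter]
  refine .iInter fun i => .iInter fun _ => .iInter fun hij => ?_
  exact measurableSet_lt ((hZ i).mono (hF (by omega)) le_rfl) measurable_const

lemma measurableSet_firstCrossing {F : ℕ → MeasurableSpace α} (hF : Monotone F)
    (hZ : ∀ i, Measurable[F i] (Z i)) (j : ℕ) : MeasurableSet[F j] (firstCrossing Z c m j) :=
  (measurableSet_belowUntil hF hZ j.le_succ).inter (measurableSet_le measurable_const (hZ j))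

lemma exists_mem_firstCrossing {ω : α} (h : ∃ j, m ≤ j ∧ j ≤ n ∧ c ≤ Z j ω) :
    ∃ j, m ≤ j ∧ j ≤ n ∧ ω ∈ firstCrossing Z c m j := by
  classical
  obtain ⟨hm, hn, hc⟩ := Nat.find_spec h
  refine ⟨Nat.find h, hm, hn, fun i hmi hi => ?_, hc⟩
  by_contra hge
  exact Nat.find_min h hi ⟨hmi, by omega, not_lt.mp hge⟩

lemma mul_indicator_le_crossingSum (hc : 0 ≤ c) (ω : α) :
    c * {ω | ∃ j, m ≤ j ∧ j ≤ n ∧ c ≤ Z j ω}.indicator (fun _ => 1) ω ≤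
      crossingSum Z c m n m ω := by
  have hnonneg : ∀ i, 0 ≤ (firstCrossing Z c m i).indicator (fun _ => c) ω :=
    fun i => indicator_nonneg (fun _ _ => hc) ω
  rw [crossingSum, Finset.sum_apply]
  by_cases hω : ω ∈ {ω | ∃ j, m ≤ j ∧ j ≤ n ∧ c ≤ Z j ω}
  · obtain ⟨j, hmj, hjn, hj⟩ := exists_mem_firstCrossing hω
    calc c * _ = (firstCrossing Z c m j).indicator (fun _ => c) ω := by
          rw [indicator_of_mem hω, indicator_of_mem hj, mul_one]
      _ ≤ _ := Finset.single_le_sum (fun i _ => hnonneg i) (Finset.mem_Ico.mpr ⟨hmj, by omega⟩)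
  · rw [indicator_of_notMem hω, mul_zero]
    exact Finset.sum_nonneg fun i _ => hnonneg i

end Crossing

namespace CondSLExp

variable (S : CondSLExp Ω) {Z : ℕ → Ω → ℝ} {c : ℝ} {m n : ℕ}

lemma crossingSum_mem (hZ : ∀ i, Measurable[S.F i] (Z i)) (j : ℕ) :
    crossingSum Z c m n j ∈ S.H :=
  S.sum_mem _ fun i _ => S.indmul_mem _
    (S.F_le i _ (measurableSet_firstCrossing S.F_mono hZ i)) _ (S.const_mem c)

lemma Et_crossingSum_le (hZ : ∀ i, Measurable[S.F i] (Z i)) (hZn : Z n ∈ S.H)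
    (hZn0 : ∀ ω, 0 ≤ Z n ω) (hsub : ∀ j, m ≤ j → j ≤ n → ∀ ω, Z j ω ≤ S.Et j (Z n) ω)
    {j : ℕ} (hmj : m ≤ j) (hjn : j ≤ n + 1) (ω : Ω) :
    S.Et j (crossingSum Z c m n j) ω ≤ S.Et j ((belowUntil Z c m j).indicator (Z n)) ω := by
  have hbelow : ∀ k, (belowUntil Z c m k).indicator (Z n) ∈ S.H := fun k =>
    S.indmul_mem _ (S.F_le k _ (measurableSet_belowUntil S.F_mono hZ k.le_succ)) _ hZn
  induction hjn using Nat.decreasingInduction generalizing ω with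
  | self =>
    rw [crossingSum, Finset.Ico_self, Finset.sum_empty]
    exact S.Et_const (n + 1) 0 ▸ S.Et_nonneg (hbelow _) (indicator_nonneg fun ω _ => hZn0 ω) ω
  | of_succ k hk ih =>
    have hD : MeasurableSet[S.F k] (belowUntil Z c m (k + 1)) :=
      measurableSet_belowUntil S.F_mono hZ le_rfl
    have hB : MeasurableSet[S.F k] (firstCrossing Z c m k) :=
      measurableSet_firstCrossing S.F_mono hZ k
    have hind : (firstCrossing Z c m k).indicator (fun _ => c) ∈ S.H :=
      S.indmul_mem _ (S.F_le k _ hB) _ (S.const_mem c)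
    have hnext : crossingSum Z c m n (k + 1) ∈ S.H := S.crossingSum_mem hZ _
    have hsplit : crossingSum Z c m n k =
        (firstCrossing Z c m k).indicator (fun _ => c) + crossingSum Z c m n (k + 1) :=
      Finset.sum_eq_sum_Ico_succ_bot hk _
    -- the later crossings are handled at time `k + 1` and pulled back by the tower property
    have hlater : S.Et k (crossingSum Z c m n (k + 1)) ω ≤
        (belowUntil Z c m (k + 1)).indicator (S.Et k (Z n)) ω := by
      rw [← S.locality k _ hD _ hZn]
      exact S.Et_le_Et_of_Et_le k.le_succ hnext (hbelow _) (ih (by omega)) ω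
    have hnow : (firstCrossing Z c m k).indicator (fun _ => c) ω ≤
        (firstCrossing Z c m k).indicator (S.Et k (Z n)) ω :=
      indicator_le_indicator' fun hω => hω.2.trans (hsub k hmj (by omega) ω)
    calc S.Et k (crossingSum Z c m n k) ω
        ≤ (firstCrossing Z c m k).indicator (fun _ => c) ω +
            S.Et k (crossingSum Z c m n (k + 1)) ω := by
          have h := S.subadd k _ hind _ hnext ω
          rwa [← hsplit, S.proj k _ hind (measurable_const.indicator hB)] at h
      _ ≤ (firstCrossing Z c m k).indicator (S.Et k (Z n)) ω +
            (belowUntil Z c m (k + 1)).indicator (S.Et k (Z n)) ω := add_le_add hnow hlater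
      _ = S.Et k ((belowUntil Z c m k).indicator (Z n)) ω := by
          rw [S.locality k _ (measurableSet_belowUntil S.F_mono hZ k.le_succ) _ hZn,
            indicator_belowUntil hmj]

theorem maximal_ineq (hZ : ∀ i, Measurable[S.F i] (Z i)) (hZn : Z n ∈ S.H)
    (hZn0 : ∀ ω, 0 ≤ Z n ω) (hsub : ∀ j, m ≤ j → j ≤ n → ∀ ω, Z j ω ≤ S.Et j (Z n) ω)
    (hmn : m ≤ n) (hc : 0 ≤ c) :
    c * S.V {ω | ∃ j, m ≤ j ∧ j ≤ n ∧ c ≤ Z j ω} ≤ S.E (Z n) := by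
  set A := {ω | ∃ j, m ≤ j ∧ j ≤ n ∧ c ≤ Z j ω}
  have hA : MeasurableSet A := by
    have hunion : A = ⋃ j, ⋃ (_ : m ≤ j), ⋃ (_ : j ≤ n), {ω | c ≤ Z j ω} := by
      ext; simp only [A, mem_iUnion, mem_ofPred_eq, exists_prop]
    rw [hunion]
    exact .iUnion fun j => .iUnion fun _ => .iUnion fun _ =>
      measurableSet_le measurable_const ((hZ j).mono (S.F_le j) le_rfl)
  have hIA : A.indicator (fun _ => 1) ∈ S.H := S.indmul_mem A hA _ (S.const_mem 1)
  calc c * S.V A = S.E fun ω => c * A.indicator (fun _ => 1) ω := (S.E_const_mul hc hIA).symm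
    _ ≤ S.E (crossingSum Z c m n m) :=
      S.E_mono (S.smul_mem c _ hIA) (S.crossingSum_mem hZ m) (mul_indicator_le_crossingSum hc)
    _ ≤ S.E ((belowUntil Z c m m).indicator (Z n)) :=
      S.E_le_of_Et_le (S.crossingSum_mem hZ m)
        (S.indmul_mem _ (S.F_le m _ (measurableSet_belowUntil S.F_mono hZ m.le_succ)) _ hZn)
        (S.Et_crossingSum_le hZ hZn hZn0 hsub le_rfl (by omega))
    _ = S.E (Z n) := by rw [belowUntil_self, indicator_univ]

end CondSLExp

/-- Chebyshev-type maximal inequality for `SL`-martingales: if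
`(X_j, F_j)_{j=1}^n` is an `SL`-martingale with `E(X_j²) < ∞` (i.e. `X_j² ∈ H`) for all
`1 ≤ j ≤ n`, then for every `λ > 0`, `V(max_{1≤j≤n}|X_j| ≥ λ) ≤ E(X_n²)/λ²`. -/
theorem slMartingale_chebyshev (S : CondSLExp Ω) (n : ℕ) (hn : 1 ≤ n)
    (X : ℕ → Ω → ℝ) (hmem : ∀ j, X j ∈ S.H)
    (hadapt : ∀ j, Measurable[S.F j] (X j))
    (hmart : ∀ s t : ℕ, 1 ≤ s → s ≤ t → t ≤ n → ∀ ω, X s ω = S.Et s (X t) ω)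
    (hsq : ∀ j, 1 ≤ j → j ≤ n → (fun ω => (X j ω) ^ 2) ∈ S.H)
    (lam : ℝ) (hlam : 0 < lam) :
    S.V {ω | ∃ j, 1 ≤ j ∧ j ≤ n ∧ lam ≤ |X j ω|} ≤
      S.E (fun ω => (X n ω) ^ 2) / lam ^ 2 := by
  have hXn2 : (fun ω => X n ω ^ 2) ∈ S.H := hsq n hn le_rfl
  have hsubmart : ∀ j, 1 ≤ j → j ≤ n → ∀ ω, X j ω ^ 2 ≤ S.Et j (fun ω' => X n ω' ^ 2) ω := by
    intro j h1j hjn ω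
    rw [hmart j n h1j hjn le_rfl ω]
    exact S.sq_Et_le_Et_sq (hmem n) hXn2 ω
  have hlevel : {ω | ∃ j, 1 ≤ j ∧ j ≤ n ∧ lam ≤ |X j ω|} =
      {ω | ∃ j, 1 ≤ j ∧ j ≤ n ∧ lam ^ 2 ≤ X j ω ^ 2} := by
    simp only [sq_le_sq, abs_of_pos hlam]
  rw [hlevel, le_div_iff₀ (by positivity), mul_comm]
  exact S.maximal_ineq (Z := fun j ω => X j ω ^ 2) (fun j => (hadapt j).pow_const 2) hXn2
    (fun ω => sq_nonneg _) hsubmart hn (sq_nonneg lam)
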